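/- Let S be a finite semigroup. If S satisfies the identity (x y)^ω = y^ω (x y)^ω for all x, y ∈ S (i.e., S ∈ DLG), then for all u, x ∈ S: u^ω x = x if and only if u x ∼_L x. Conversely, if for all u, x ∈ S the equivalence (u^ω x = x ⟺ u x ∼_L x) holds, then S satisfies (x y)^ω = y^ω (x y)^ω for all x, y ∈ S. -/
import Mathlib


namespace WordEq

variable {C X S : Type*}

/-- `spow u n = u^(n+1)` : positive powers in a semigroup. -/
def spow [Mul S] (u : S) : ℕ → S
  | 0 => u
  | n + 1 => spow u n * u

/-- `e` is the ω-power of `u`, i.e. the (unique) idempotent among the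
positive powers `u, u², u³, …` of `u`. -/
def IsOmega [Mul S] (u e : S) : Prop := (∃ n : ℕ, spow u n = e) ∧ e * e = e

/-- Extension of a substitution `σ : 𝒳 → Σ⁺` to words over `Ω = Σ ⊎ 𝒳`,
fixing the constants. -/
def subst (σ : X → List C) (w : List (C ⊕ X)) : List C :=
  w.flatMap (Sum.elim (fun a => [a]) σ)

/-- `p^k` occurs as a factor of `w`. -/
def hasPowFactor (w p : List C) (k : ℕ) : Prop :=
  ∃ u v : List C, w = u ++ (List.replicate k p).flatten ++ v

/-- The exponent of periodicity of a word: the largest `k` such that `p^k`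
is a factor of `w` for some nonempty `p`. -/
noncomputable def expWord (w : List C) : ℕ :=
  sSup {k : ℕ | ∃ p : List C, p ≠ [] ∧ hasPowFactor w p k}

/-- The exponent of periodicity of a substitution. -/
noncomputable def expSub [Fintype X] (σ : X → List C) : ℕ :=
  Finset.univ.sup fun x : X => expWord (σ x)

/-- `μ` is (the restriction to nonempty words of) a semigroup homomorphism
`Ω⁺ → S`. -/
def IsConstraint [Mul S] (μ : List (C ⊕ X) → S) : Prop :=
  ∀ u v : List (C ⊕ X), u ≠ [] → v ≠ [] → μ (u ++ v) = μ u * μ v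

/-- `σ : 𝒳 → Σ⁺` is a solution of the word equation `U = V`. -/
def IsSolution (U V : List (C ⊕ X)) (σ : X → List C) : Prop :=
  (∀ x : X, σ x ≠ []) ∧ subst σ U = subst σ V

/-- `σ` is a solution of the word equation `U = V` with constraint `μ`. -/
def IsSolutionC [Mul S] (U V : List (C ⊕ X)) (μ : List (C ⊕ X) → S)
    (σ : X → List C) : Prop :=
  IsSolution U V σ ∧ ∀ x : X, μ ((σ x).map Sum.inl) = μ [Sum.inr x]

/-- Each variable occurs at most twice in `UV`. -/
def Quadratic [DecidableEq C] [DecidableEq X] (U V : List (C ⊕ X)) : Prop :=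
  ∀ x : X, (U ++ V).count (Sum.inr x) ≤ 2

/-- `x ≤_L y` iff `x ∈ S¹y`. -/
def leL [Mul S] (x y : S) : Prop := x = y ∨ ∃ u, x = u * y

/-- `x ≤_R y` iff `x ∈ yS¹`. -/
def leR [Mul S] (x y : S) : Prop := x = y ∨ ∃ u, x = y * u

/-- `x ≤_J y` iff `x ∈ S¹yS¹`. -/
def leJ [Mul S] (x y : S) : Prop :=
  x = y ∨ (∃ u, x = u * y) ∨ (∃ v, x = y * v) ∨ (∃ u v, x = u * y * v)

/-- Green's relation `∼_L`. -/
def eqL [Mul S] (x y : S) : Prop := leL x y ∧ leL y x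

/-- Green's relation `∼_R`. -/
def eqR [Mul S] (x y : S) : Prop := leR x y ∧ leR y x

/-- Green's relation `∼_J`. -/
def eqJ [Mul S] (x y : S) : Prop := leJ x y ∧ leJ y x

/-- Green's relation `∼_D = ∼_L ∘ ∼_R`. -/
def eqD [Mul S] (x y : S) : Prop := ∃ z, eqL x z ∧ eqR z y

section Aux

variable {S : Type*} [Semigroup S]

theorem spow_add (u : S) (m n : ℕ) :
    spow u (m + n + 1) = spow u m * spow u n := by
  induction n with
  | zero => rfl
  | succ n ih =>
    show spow u (m + n + 1) * u = _
    rw [ih, spow, mul_assoc]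

theorem spow_mul_eq (u x : S) (h : u * x = x) : ∀ n, spow u n * x = x := by
  intro n
  induction n with
  | zero => exact h
  | succ n ih => rw [spow, mul_assoc, h, ih]

theorem spow_period (u : S) {i d : ℕ} (hd : spow u (i + d) = spow u i) :
    ∀ t k, spow u (i + t + k * d) = spow u (i + t) := by
  have step : ∀ t, spow u (i + t + d) = spow u (i + t) := by
    intro t
    cases t with
    | zero => simpa using hd
    | succ t =>
      have h1 : i + (t + 1) + d = (i + d) + t + 1 := by omega
      have h2 : i + (t + 1) = i + t + 1 := by omega
      rw [h1, spow_add, hd, h2, ← spow_add]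
  intro t k
  induction k with
  | zero => simp
  | succ k ih =>
    have : i + t + (k + 1) * d = (i + t + k * d) + d := by ring
    rw [this]
    have := step (t + k * d)
    rw [← add_assoc] at this
    rw [this, ih]

theorem exists_isOmega [Finite S] (u : S) : ∃ e : S, IsOmega u e := by
  have : ¬ Function.Injective (spow u) := by
    intro h
    exact (Finite.of_injective _ h).false
  rw [Function.not_injective_iff] at this
  obtain ⟨a, b, hab, hne⟩ := this
  wlog hlt : a < b generalizing a b
  · exact this b a hab.symm (Ne.symm hne) (by omega)
  set i := a
  set d := b - a with hd
  have hd0 : 0 < d := by omega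
  have hper : spow u (i + d) = spow u i := by
    have : i + d = b := by omega
    rw [this]; exact hab.symm
  -- choose n = d * (i + 1) - 1
  set n := d * (i + 1) - 1 with hn
  have hn1 : n + 1 = d * (i + 1) := by
    have : 1 ≤ d * (i + 1) := Nat.one_le_iff_ne_zero.mpr (by positivity)
    omega
  have hni : i ≤ n := by nlinarith [hn1]
  refine ⟨spow u n, ⟨n, rfl⟩, ?_⟩
  rw [← spow_add]
  have h1 : n + n + 1 = i + (n - i) + (i + 1) * d := by
    have hc : (i + 1) * d = d * (i + 1) := Nat.mul_comm _ _
    omega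
  have h2 : n = i + (n - i) := by omega
  rw [h1, spow_period u hper, ← h2]

end Aux

/-- A finite semigroup `S` satisfies `(xy)^ω = y^ω (xy)^ω`
(i.e. `S ∈ DLG`) if and only if for all `u, x ∈ S` one has
`u^ω x = x ⟺ u x ∼_L x`. -/
theorem stmt16 (S : Type) [Semigroup S] [Finite S] :
    (∀ x y e f : S, IsOmega (x * y) e → IsOmega y f → e = f * e) ↔
    (∀ u x : S, ∀ e : S, IsOmega u e → (e * x = x ↔ eqL (u * x) x)) := by
  constructor
  · intro hDLG u x e he
    constructor
    · intro hex
      obtain ⟨⟨n, hn⟩, hee⟩ := he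
      constructor
      · exact Or.inr ⟨u, rfl⟩
      · cases n with
        | zero =>
          refine Or.inl ?_
          rw [show u = e from hn, hex]
        | succ m =>
          refine Or.inr ⟨spow u m, ?_⟩
          rw [← mul_assoc]
          show x = spow u (m + 1) * x
          rw [hn, hex]
    · rintro ⟨_, hx⟩
      obtain ⟨⟨n, hn⟩, hee⟩ := he
      rcases hx with hx | ⟨v, hv⟩
      · rw [← hn]; exact spow_mul_eq u x hx.symm n
      · -- x = v * (u * x); set s = v * u
        have hsx : (v * u) * x = x := by rw [mul_assoc, ← hv]
        obtain ⟨f, hf⟩ := exists_isOmega (v * u)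
        have hfe : f = e * f := hDLG v u f e hf ⟨⟨n, hn⟩, hee⟩
        obtain ⟨⟨m, hm⟩, _⟩ := hf
        have hfx : f * x = x := by rw [← hm]; exact spow_mul_eq _ x hsx m
        calc e * x = e * (f * x) := by rw [hfx]
          _ = (e * f) * x := by rw [mul_assoc]
          _ = f * x := by rw [← hfe]
          _ = x := hfx
  · intro H x y e f he hf
    have key := (H y e f hf).mpr
    have hfac : ∀ n, ∃ c : S, spow (x * y) n = c * y := by
      intro n
      induction n with
      | zero => exact ⟨x, rfl⟩
      | succ n ih =>
        obtain ⟨c, hc⟩ := ih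
        exact ⟨spow (x * y) n * x, by show spow (x*y) n * (x*y) = _; rw [mul_assoc]⟩
    obtain ⟨⟨n, hn⟩, hee⟩ := he
    obtain ⟨c, hc⟩ := hfac n
    have : eqL (y * e) e := by
      constructor
      · exact Or.inr ⟨y, rfl⟩
      · refine Or.inr ⟨c, ?_⟩
        rw [← mul_assoc, ← hc, hn, hee]
    exact (key this).symm


end WordEq
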